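/- For every integer n≥1 there exist rational numbers s_1, …, s_n such that Δ_{n+1,0}(X) = (2X−1)·Σ_{i=1}^{n} s_i (X(X−1))^i in ℚ[X], and in any such representation necessarily s_n = (−1)^{n+1}/(3·2^n (n−1)!). Equivalently, the polynomial Δ_{n+1,0} has degree 2n+1 and its leading coefficient equals (−1)^{n+1}/(3·2^{n−1} (n−1)!). -/

import Mathlib

/-!
The σ_i(j) are the coefficients of ∏_{k<j} (1 + k t) and the Q_k(j) those of its inverse, so
passing from j + 1 to j + 2 gives p_{n+1}(X + 1) = p_{n+1}(X) + X p_n(X) together with a matching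
recurrence for Q; an induction on j then gives p_n(-j) = (-1)^n Q_n(j + 1), that is
r_n(X) = (-1)^n p_n(1 - X). Hence Δ_{N,0} = ±(p_N(1 - X) - p_N(X)) is antisymmetric under
X ↦ 1 - X and vanishes at 0, which forces the shape (2X - 1) Σ s_i (X(X - 1))^i. Its coefficient
of X^(2N-1) only involves the two top coefficients of p_N, and comparing coefficients in the
shift identity determines these recursively.
-/

/-- `σ_i(j) = Σ_{1 ≤ n_1 < ⋯ < n_i ≤ j-1} n_1 ⋯ n_i`, with `σ_0(j) = 1`. -/
def sigmaP (i j : ℕ) : ℚ :=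
  ∑ t ∈ (Finset.Icc 1 (j - 1)).powersetCard i, ∏ m ∈ t, (m : ℚ)

/-- `Q_0(j) = 1` and `Q_k(j) = -Σ_{i=1}^{k} σ_i(j) Q_{k-i}(j)` for `k ≥ 1`. -/
def QP (j : ℕ) : ℕ → ℚ
  | 0 => 1
  | k + 1 => -∑ i : Fin (k + 1), sigmaP (i + 1) j * QP j (k - i)
  termination_by k => k
  decreasing_by omega

/-- `Δ_{N,0} = r_N - (-1)^N p_N`, given families `p`, `r` of interpolating polynomials. -/
noncomputable def DeltaN0 (p r : ℕ → Polynomial ℚ) (N : ℕ) : Polynomial ℚ :=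
  r N - (-1) ^ N * p N

open Polynomial Finset

lemma sigmaP_zero_left (j : ℕ) : sigmaP 0 j = 1 := by
  simp [sigmaP]

lemma sigmaP_succ_one (i : ℕ) : sigmaP (i + 1) 1 = 0 := by
  rw [sigmaP, powersetCard_eq_empty.2 (by simp), sum_empty]

lemma sigmaP_succ_succ (i j : ℕ) :
    sigmaP (i + 1) (j + 2) = sigmaP (i + 1) (j + 1) + (j + 1 : ℚ) * sigmaP i (j + 1) := by
  have hnot : j + 1 ∉ Icc 1 j := by simp
  have hIcc : Icc 1 (j + 1) = insert (j + 1) (Icc 1 j) := by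
    ext x; simp only [mem_Icc, mem_insert]; omega
  have hnot_mem : ∀ t ∈ (Icc 1 j).powersetCard i, j + 1 ∉ t :=
    fun t ht h => hnot ((mem_powersetCard.1 ht).1 h)
  rw [sigmaP, sigmaP, sigmaP, show j + 2 - 1 = j + 1 from rfl, Nat.add_sub_cancel, hIcc,
    powersetCard_succ_insert hnot, sum_union, sum_image, mul_sum]
  · congr 1
    refine sum_congr rfl fun t ht => ?_
    rw [prod_insert (hnot_mem t ht)]
    push_cast
    ring
  · intro t ht u hu h
    simpa [erase_insert (hnot_mem t ht), erase_insert (hnot_mem u hu)] using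
      congrArg (erase · (j + 1)) h
  · refine disjoint_right.2 fun t ht ht' => ?_
    obtain ⟨u, -, rfl⟩ := mem_image.1 ht
    exact hnot ((mem_powersetCard.1 ht').1 (mem_insert_self _ _))

lemma QP_zero_right (j : ℕ) : QP j 0 = 1 := by
  rw [QP]

lemma QP_succ (j k : ℕ) :
    QP j (k + 1) = -∑ i ∈ range (k + 1), sigmaP (i + 1) j * QP j (k - i) := by
  rw [QP, Fin.sum_univ_eq_sum_range (fun i => sigmaP (i + 1) j * QP j (k - i))]

lemma QP_one_succ (k : ℕ) : QP 1 (k + 1) = 0 := by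
  simp [QP_succ, sigmaP_succ_one]

noncomputable def sigmaSeries (j : ℕ) : PowerSeries ℚ := PowerSeries.mk (sigmaP · j)

noncomputable def qSeries (j : ℕ) : PowerSeries ℚ := PowerSeries.mk (QP j)

lemma sigmaSeries_mul_qSeries (j : ℕ) : sigmaSeries j * qSeries j = 1 := by
  ext k
  rw [PowerSeries.coeff_mul, Nat.sum_antidiagonal_eq_sum_range_succ_mk, PowerSeries.coeff_one]
  simp only [sigmaSeries, qSeries, PowerSeries.coeff_mk]
  rcases k with _ | k
  · simp [sigmaP_zero_left, QP_zero_right]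
  · simp only [sum_range_succ', Nat.sub_zero, QP_succ, sigmaP_zero_left, Nat.reduceSubDiff,
      if_neg k.succ_ne_zero]
    ring

lemma sigmaSeries_succ_succ (j : ℕ) :
    sigmaSeries (j + 2) =
      sigmaSeries (j + 1) * (1 + PowerSeries.C (j + 1 : ℚ) * PowerSeries.X) := by
  ext k
  rw [mul_add, mul_one, map_add, mul_left_comm, PowerSeries.coeff_C_mul]
  rcases k with _ | k
  · simp [sigmaSeries, sigmaP_zero_left]
  · simp only [sigmaSeries, PowerSeries.coeff_succ_mul_X, PowerSeries.coeff_mk, sigmaP_succ_succ]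

lemma QP_succ_succ (j k : ℕ) :
    QP (j + 1) (k + 1) = QP (j + 2) (k + 1) + (j + 1 : ℚ) * QP (j + 2) k := by
  have key : qSeries (j + 1) =
      (1 + PowerSeries.C (j + 1 : ℚ) * PowerSeries.X) * qSeries (j + 2) := by
    calc qSeries (j + 1) = qSeries (j + 1) * (sigmaSeries (j + 2) * qSeries (j + 2)) := by
          rw [sigmaSeries_mul_qSeries, mul_one]
      _ = (sigmaSeries (j + 1) * qSeries (j + 1)) *
          ((1 + PowerSeries.C (j + 1 : ℚ) * PowerSeries.X) * qSeries (j + 2)) := by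
          rw [sigmaSeries_succ_succ]; ring
      _ = _ := by rw [sigmaSeries_mul_qSeries, one_mul]
  have := congrArg (PowerSeries.coeff (k + 1)) key
  rw [add_mul, one_mul, map_add, mul_assoc, PowerSeries.coeff_C_mul,
    PowerSeries.coeff_succ_X_mul] at this
  simpa [qSeries] using this

namespace Polynomial

lemma eq_of_eval_natCast_eq {R : Type*} [CommRing R] [IsDomain R] [CharZero R] {f g : R[X]}
    (h : ∀ j : ℕ, 1 ≤ j → f.eval (j : R) = g.eval (j : R)) : f = g := by
  refine eq_of_infinite_eval_eq f g <|
    Set.infinite_of_injective_forall_mem (f := fun j : ℕ => ((j + 1 : ℕ) : R)) ?_ ?_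
  · intro a b hab
    simpa using hab
  · intro j
    exact h (j + 1) j.succ_pos

section CommRing

variable {R : Type*} [CommRing R]

lemma coeff_comp_X_add_one (f : R[X]) (k : ℕ) :
    (f.comp (X + 1)).coeff k = f.sum fun i a => a * i.choose k := by
  simp only [comp_eq_sum_left, Polynomial.sum_def, finsetSum_coeff, coeff_C_mul,
    coeff_X_add_one_pow]

lemma coeff_comp_X_add_one_of_natDegree_le {f : R[X]} {d : ℕ} (hf : f.natDegree ≤ d + 2) :
    (f.comp (X + 1)).coeff d =
      f.coeff d + (d + 1) * f.coeff (d + 1) + ((d + 2).choose 2 : R) * f.coeff (d + 2) := by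
  have hlow : ∑ i ∈ range d, f.coeff i * (i.choose d : R) = 0 :=
    sum_eq_zero fun i hi => by
      rw [Nat.choose_eq_zero_of_lt (mem_range.1 hi), Nat.cast_zero, mul_zero]
  rw [coeff_comp_X_add_one, sum_over_range' _ (fun _ => zero_mul _) (d + 3) (by omega),
    sum_range_succ, sum_range_succ, sum_range_succ, hlow, Nat.choose_self,
    Nat.choose_succ_self_right, Nat.choose_symm_add]
  push_cast
  ring

lemma coeff_comp_X_add_one_natDegree {f : R[X]} {d : ℕ} (hf : f.natDegree ≤ d) :
    (f.comp (X + 1)).coeff d = f.coeff d := by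
  rw [coeff_comp_X_add_one_of_natDegree_le (by omega),
    coeff_eq_zero_of_natDegree_lt (n := d + 1) (by omega),
    coeff_eq_zero_of_natDegree_lt (n := d + 2) (by omega)]
  ring

lemma coeff_comp_one_sub_X (f : R[X]) (k : ℕ) :
    (f.comp (1 - X)).coeff k = (-1) ^ k * (f.comp (X + 1)).coeff k := by
  have h : (1 - X : R[X]) = (X + 1).comp (C (-1) * X) := by simp; ring
  rw [h, ← comp_assoc, comp_C_mul_X_coeff, mul_comm]

lemma comp_one_sub_X_comp_one_sub_X (f : R[X]) : (f.comp (1 - X)).comp (1 - X) = f := by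
  rw [comp_assoc, sub_comp, one_comp, X_comp, sub_sub_cancel, comp_X]

lemma comp_one_sub_X_sub_self_comp_one_sub_X (f : R[X]) :
    (f.comp (1 - X) - f).comp (1 - X) = -(f.comp (1 - X) - f) := by
  rw [sub_comp, comp_one_sub_X_comp_one_sub_X, neg_sub]

lemma natDegree_comp_one_sub_X_le (f : R[X]) : (f.comp (1 - X)).natDegree ≤ f.natDegree := by
  have h : (1 - X : R[X]).natDegree ≤ 1 := by compute_degree
  exact natDegree_comp_le.trans (mul_le_of_le_one_right (Nat.zero_le _) h)

lemma coeff_comp_one_sub_X_sub_self_of_natDegree_le {f : R[X]} {k : ℕ}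
    (hf : f.natDegree ≤ 2 * k + 2) :
    (f.comp (1 - X) - f).coeff (2 * k + 1) =
      -2 * (f.coeff (2 * k + 1) + (k + 1) * f.coeff (2 * k + 2)) := by
  rw [coeff_sub, coeff_comp_one_sub_X, coeff_comp_X_add_one_of_natDegree_le (by omega),
    coeff_eq_zero_of_natDegree_lt (n := 2 * k + 1 + 2) (by omega), pow_succ, pow_mul, neg_one_sq,
    one_pow]
  push_cast
  ring

lemma monic_X_mul_X_sub_one : (X * (X - 1) : R[X]).Monic :=
  monic_X.mul (by simpa using monic_X_sub_C (1 : R))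

lemma natDegree_X_mul_X_sub_one_pow [Nontrivial R] (i : ℕ) :
    ((X * (X - 1) : R[X]) ^ i).natDegree = 2 * i := by
  rw [monic_X_mul_X_sub_one.natDegree_pow,
    monic_X.natDegree_mul (by simpa using monic_X_sub_C (1 : R)), natDegree_X,
    ← C_1, natDegree_X_sub_C, mul_comm]

lemma coeff_X_mul_X_sub_one_pow_two_mul [Nontrivial R] (i : ℕ) :
    ((X * (X - 1) : R[X]) ^ i).coeff (2 * i) = 1 := by
  simpa [natDegree_X_mul_X_sub_one_pow] using
    (monic_X_mul_X_sub_one (R := R) |>.pow i).coeff_natDegree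

lemma coeff_two_mul_X_sub_one_mul (u : R[X]) (k : ℕ) :
    ((2 * X - 1) * u).coeff (k + 1) = 2 * u.coeff k - u.coeff (k + 1) := by
  rw [sub_mul, one_mul, coeff_sub, mul_assoc, ← C_ofNat (R := R), coeff_C_mul, coeff_X_mul]

lemma two_mul_X_sub_one_mul_X_mul_X_sub_one_pow_comp_one_sub_X (i : ℕ) :
    ((2 * X - 1) * (X * (X - 1)) ^ i : R[X]).comp (1 - X) = -((2 * X - 1) * (X * (X - 1)) ^ i) := by
  simp only [mul_comp, pow_comp, sub_comp, one_comp, X_comp, ofNat_comp]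
  ring

lemma coeff_two_mul_X_sub_one_mul_sum [Nontrivial R] (s : ℕ → R) {n : ℕ} (hn : 1 ≤ n) :
    ((2 * X - 1) * ∑ i ∈ Icc 1 n, C (s i) * (X * (X - 1)) ^ i).coeff (2 * n + 1) = 2 * s n := by
  have hlt : ∀ i, i < n → ((X * (X - 1)) ^ i : R[X]).natDegree < 2 * n := fun i hi => by
    rw [natDegree_X_mul_X_sub_one_pow]; omega
  have hdeg : (∑ i ∈ Icc 1 n, C (s i) * (X * (X - 1)) ^ i : R[X]).natDegree ≤ 2 * n := by
    refine natDegree_sum_le_of_forall_le _ _ fun i hi => (natDegree_C_mul_le _ _).trans ?_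
    rw [natDegree_X_mul_X_sub_one_pow]
    grind
  rw [coeff_two_mul_X_sub_one_mul, coeff_eq_zero_of_natDegree_lt (n := 2 * n + 1) (by omega),
    finsetSum_coeff, sum_eq_single_of_mem n (mem_Icc.2 ⟨hn, le_rfl⟩), coeff_C_mul,
    coeff_X_mul_X_sub_one_pow_two_mul]
  · ring
  · intro i hi hne
    rw [coeff_C_mul, coeff_eq_zero_of_natDegree_lt (hlt i (by grind)), mul_zero]

end CommRing

section Antisymmetric

variable {K : Type*} [Field K] [CharZero K]

lemma coeff_two_mul_eq_zero_of_comp_one_sub_X_eq_neg {f : K[X]} (hf : f.comp (1 - X) = -f)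
    {m : ℕ} (hdeg : f.natDegree ≤ 2 * m) : f.coeff (2 * m) = 0 := by
  have h := congrArg (coeff · (2 * m)) hf
  simp only [coeff_comp_one_sub_X, coeff_comp_X_add_one_natDegree hdeg, pow_mul, neg_one_sq,
    one_pow, one_mul, coeff_neg] at h
  exact CharZero.eq_neg_self_iff.1 h

lemma natDegree_le_of_comp_one_sub_X_eq_neg {f : K[X]} (hf : f.comp (1 - X) = -f) {m : ℕ}
    (hdeg : f.natDegree ≤ 2 * m + 2) : f.natDegree ≤ 2 * m + 1 := by
  rcases hdeg.lt_or_eq with h | h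
  · omega
  · have hlead : f.leadingCoeff = 0 := by
      rw [leadingCoeff, h]
      exact coeff_two_mul_eq_zero_of_comp_one_sub_X_eq_neg hf (m := m + 1) (by omega)
    simp [leadingCoeff_eq_zero.1 hlead]

lemma exists_eq_two_mul_X_sub_one_mul_sum_of_comp_one_sub_X_eq_neg (m : ℕ) {f : K[X]}
    (hf : f.comp (1 - X) = -f) (h0 : f.coeff 0 = 0) (hdeg : f.natDegree ≤ 2 * m + 1) :
    ∃ s : ℕ → K, f = (2 * X - 1) * ∑ i ∈ Icc 1 m, C (s i) * (X * (X - 1)) ^ i := by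
  induction m generalizing f with
  | zero =>
    refine ⟨0, ?_⟩
    have h1 : f.eval 1 = 0 := by
      simpa [eval_comp, ← coeff_zero_eq_eval_zero, h0] using congrArg (eval 0) hf
    rw [eq_X_add_C_of_natDegree_le_one hdeg] at h1 ⊢
    simp_all
  | succ m ih =>
    -- Subtracting (c / 2) W clears the top coefficient; antisymmetry then clears the next one.
    set c := f.coeff (2 * m + 3)
    set W : K[X] := (2 * X - 1) * (X * (X - 1)) ^ (m + 1)
    have hWdeg : W.natDegree ≤ 2 * m + 3 := by
      have h2X : (2 * X - 1 : K[X]).natDegree ≤ 1 := by compute_degree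
      refine natDegree_mul_le.trans ?_
      rw [natDegree_X_mul_X_sub_one_pow]
      omega
    have hWtop : W.coeff (2 * m + 3) = 2 := by
      rw [show 2 * m + 3 = 2 * (m + 1) + 1 by ring, coeff_two_mul_X_sub_one_mul,
        coeff_X_mul_X_sub_one_pow_two_mul,
        coeff_eq_zero_of_natDegree_lt (by rw [natDegree_X_mul_X_sub_one_pow]; omega)]
      ring
    set g := f - C (c / 2) * W
    have hg : g.comp (1 - X) = -g := by
      rw [sub_comp, mul_comp, C_comp, hf, two_mul_X_sub_one_mul_X_mul_X_sub_one_pow_comp_one_sub_X]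
      ring
    have hg0 : g.coeff 0 = 0 := by
      rw [coeff_sub, coeff_C_mul, h0, mul_coeff_zero, coeff_zero_eq_eval_zero (_ ^ _)]
      simp
    have hgdeg : g.natDegree ≤ 2 * m + 2 := by
      rw [natDegree_le_iff_coeff_eq_zero]
      intro N hN
      rw [coeff_sub, coeff_C_mul]
      rcases (show 2 * m + 3 ≤ N by omega).eq_or_lt with rfl | hN'
      · rw [hWtop]
        ring
      · rw [coeff_eq_zero_of_natDegree_lt (by omega), coeff_eq_zero_of_natDegree_lt (by omega)]
        ring
    obtain ⟨s, hs⟩ := ih hg hg0 (natDegree_le_of_comp_one_sub_X_eq_neg hg hgdeg)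
    refine ⟨Function.update s (m + 1) (c / 2), ?_⟩
    rw [sum_Icc_succ_top (by omega), Function.update_self,
      sum_congr rfl fun i hi => by rw [Function.update_of_ne (by grind)], mul_add, ← hs]
    simp only [g, W]
    ring

end Antisymmetric

end Polynomial

section Interpolants

variable {p : ℕ → ℚ[X]}
  (hpval : ∀ n : ℕ, ∀ j : ℕ, 1 ≤ j → (p n).eval (j : ℚ) = sigmaP n j)
include hpval

lemma p_zero_eq_one : p 0 = 1 :=
  eq_of_eval_natCast_eq fun j hj => by rw [hpval 0 j hj, sigmaP_zero_left, eval_one]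

lemma p_succ_comp_X_add_one (n : ℕ) : (p (n + 1)).comp (X + 1) = p (n + 1) + X * p n := by
  refine eq_of_eval_natCast_eq fun j hj => ?_
  obtain ⟨j, rfl⟩ := Nat.exists_eq_add_of_le' hj
  rw [eval_comp, eval_add, eval_one, eval_X, eval_add, eval_mul, eval_X,
    show ((j + 1 : ℕ) : ℚ) + 1 = ((j + 2 : ℕ) : ℚ) by push_cast; ring,
    hpval _ _ (by omega), hpval _ _ hj, hpval _ _ hj, sigmaP_succ_succ]
  push_cast
  ring

lemma p_succ_eval_zero (n : ℕ) : (p (n + 1)).eval 0 = 0 := by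
  have h := congrArg (eval 0) (p_succ_comp_X_add_one hpval n)
  have h1 := hpval (n + 1) 1 le_rfl
  rw [Nat.cast_one, sigmaP_succ_one] at h1
  simpa [eval_comp, h1] using h.symm

lemma p_eval_neg_natCast (j n : ℕ) : (p n).eval (-(j : ℚ)) = (-1) ^ n * QP (j + 1) n := by
  induction j generalizing n with
  | zero =>
    rcases n with _ | n
    · simp [p_zero_eq_one hpval, QP_zero_right]
    · simp [p_succ_eval_zero hpval, QP_one_succ]
  | succ j ihj =>
    induction n with
    | zero => simp [p_zero_eq_one hpval, QP_zero_right]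
    | succ n ihn =>
      have h := congrArg (eval (-((j + 1 : ℕ) : ℚ))) (p_succ_comp_X_add_one hpval n)
      rw [eval_comp, eval_add, eval_one, eval_X,
        show -((j + 1 : ℕ) : ℚ) + 1 = -(j : ℚ) by push_cast; ring, ihj, eval_add, eval_mul,
        eval_X, ihn, QP_succ_succ] at h
      rw [show j + 1 + 1 = j + 2 from rfl]
      push_cast at h ⊢
      linear_combination -h

section LeadingCoefficients

variable (hpdeg : ∀ n : ℕ, (p n).natDegree ≤ 2 * n)
include hpdeg

lemma p_succ_coeff_two_mul_add_two (m : ℕ) :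
    (2 * m + 2 : ℚ) * (p (m + 1)).coeff (2 * m + 2) = (p m).coeff (2 * m) := by
  have h := congrArg (coeff · (2 * m + 1)) (p_succ_comp_X_add_one hpval m)
  simp only [coeff_add, coeff_X_mul] at h
  rw [coeff_comp_X_add_one_of_natDegree_le (by grind),
    coeff_eq_zero_of_natDegree_lt (n := 2 * m + 1 + 2) (by grind)] at h
  push_cast at h
  linear_combination h

lemma p_succ_coeff_two_mul_add_one (m : ℕ) :
    (2 * m + 1 : ℚ) * ((p (m + 1)).coeff (2 * m + 1) + (m + 1) * (p (m + 1)).coeff (2 * m + 2)) =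
      (X * p m).coeff (2 * m) := by
  have h := congrArg (coeff · (2 * m)) (p_succ_comp_X_add_one hpval m)
  simp only [coeff_add] at h
  have hchoose : (2 * m + 2).choose 2 = (m + 1) * (2 * m + 1) := by
    rw [Nat.choose_two_right, show 2 * m + 2 - 1 = 2 * m + 1 by omega]
    exact Nat.div_eq_of_eq_mul_left two_pos (by ring)
  rw [coeff_comp_X_add_one_of_natDegree_le (by grind), hchoose] at h
  push_cast at h
  linear_combination h

lemma p_coeff_two_mul (m : ℕ) : (p m).coeff (2 * m) = 1 / (2 ^ m * m.factorial) := by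
  induction m with
  | zero => simp [p_zero_eq_one hpval]
  | succ m ih =>
    have h := p_succ_coeff_two_mul_add_two hpval hpdeg m
    rw [ih] at h
    rw [Nat.factorial_succ, show 2 * (m + 1) = 2 * m + 2 by ring]
    push_cast
    field_simp at h ⊢
    linear_combination h

-- The left side is the coefficient of X^(2m+1) in p_{m+1}(X + 1/2), centred at the fixed point
-- of X ↦ 1 - X.
lemma p_succ_coeff_centred (m : ℕ) :
    (p (m + 1)).coeff (2 * m + 1) + (m + 1) * (p (m + 1)).coeff (2 * m + 2) =
      -m / (3 * 2 ^ m * m.factorial) := by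
  induction m with
  | zero => simpa using p_succ_coeff_two_mul_add_one hpval hpdeg 0
  | succ m ih =>
    have h := p_succ_coeff_two_mul_add_one hpval hpdeg (m + 1)
    have hX : (X * p (m + 1)).coeff (2 * (m + 1)) = (p (m + 1)).coeff (2 * m + 1) :=
      coeff_X_mul _ _
    rw [hX] at h
    have ha := p_coeff_two_mul hpval hpdeg (m + 1)
    rw [show 2 * (m + 1) = 2 * m + 2 by ring] at ha
    rw [eq_div_of_mul_eq (by positivity) ((mul_comm _ _).trans h), eq_sub_of_add_eq ih, ha,
      Nat.factorial_succ]
    push_cast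
    field_simp
    ring

end LeadingCoefficients

section Delta

variable {r : ℕ → ℚ[X]}
  (hrval : ∀ n : ℕ, ∀ j : ℕ, 1 ≤ j → (r n).eval (j : ℚ) = QP j n)
include hrval

lemma r_eq_neg_one_pow_mul_comp_one_sub_X (n : ℕ) : r n = (-1) ^ n * (p n).comp (1 - X) := by
  refine eq_of_eval_natCast_eq fun j hj => ?_
  obtain ⟨j, rfl⟩ := Nat.exists_eq_add_of_le' hj
  rw [hrval n _ hj, eval_mul, eval_pow, eval_neg, eval_one, eval_comp, eval_sub, eval_one,
    eval_X, show (1 : ℚ) - ((j + 1 : ℕ) : ℚ) = -(j : ℚ) by push_cast; ring,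
    p_eval_neg_natCast hpval,
    ← mul_assoc, ← mul_pow, neg_one_mul, neg_neg, one_pow, one_mul]

lemma DeltaN0_eq_C_mul (N : ℕ) :
    DeltaN0 p r N = C ((-1) ^ N) * ((p N).comp (1 - X) - p N) := by
  rw [DeltaN0, r_eq_neg_one_pow_mul_comp_one_sub_X hpval hrval, mul_sub, map_pow, map_neg, map_one]

lemma DeltaN0_comp_one_sub_X (N : ℕ) : (DeltaN0 p r N).comp (1 - X) = -DeltaN0 p r N := by
  rw [DeltaN0_eq_C_mul hpval hrval, mul_comp, C_comp, comp_one_sub_X_sub_self_comp_one_sub_X,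
    mul_neg]

lemma DeltaN0_succ_coeff_zero (n : ℕ) : (DeltaN0 p r (n + 1)).coeff 0 = 0 := by
  have h1 := hpval (n + 1) 1 le_rfl
  rw [Nat.cast_one, sigmaP_succ_one] at h1
  rw [DeltaN0_eq_C_mul hpval hrval, coeff_C_mul, coeff_sub, coeff_zero_eq_eval_zero,
    coeff_zero_eq_eval_zero, eval_comp, eval_sub, eval_one, eval_X, sub_zero, h1,
    p_succ_eval_zero hpval, sub_zero, mul_zero]

variable (hpdeg : ∀ n : ℕ, (p n).natDegree ≤ 2 * n)
include hpdeg

lemma DeltaN0_natDegree_le (m : ℕ) : (DeltaN0 p r (m + 2)).natDegree ≤ 2 * m + 3 := by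
  have h : (DeltaN0 p r (m + 2)).natDegree ≤ 2 * (m + 1) + 2 := by
    rw [DeltaN0_eq_C_mul hpval hrval]
    refine (natDegree_C_mul_le _ _).trans <| (natDegree_sub_le _ _).trans <| max_le ?_ ?_
    · exact (natDegree_comp_one_sub_X_le _).trans (hpdeg _)
    · exact hpdeg _
  have := natDegree_le_of_comp_one_sub_X_eq_neg (DeltaN0_comp_one_sub_X hpval hrval _) h
  omega

lemma DeltaN0_coeff_two_mul_add_three (m : ℕ) :
    (DeltaN0 p r (m + 2)).coeff (2 * m + 3) = (-1) ^ m / (3 * 2 ^ m * m.factorial) := by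
  have h := p_succ_coeff_centred hpval hpdeg (m + 1)
  rw [DeltaN0_eq_C_mul hpval hrval, coeff_C_mul, show 2 * m + 3 = 2 * (m + 1) + 1 by ring,
    coeff_comp_one_sub_X_sub_self_of_natDegree_le (hpdeg _), h, Nat.factorial_succ]
  push_cast
  field_simp
  ring

end Delta

end Interpolants

theorem stmt13_general (p r : ℕ → Polynomial ℚ)
    (hpdeg : ∀ n : ℕ, (p n).natDegree ≤ 2 * n)
    (hpval : ∀ n : ℕ, ∀ j : ℕ, 1 ≤ j → (p n).eval (j : ℚ) = sigmaP n j)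
    (hrval : ∀ n : ℕ, ∀ j : ℕ, 1 ≤ j → (r n).eval (j : ℚ) = QP j n)
    (n : ℕ) (hn : 1 ≤ n) :
    (∃ s : ℕ → ℚ, DeltaN0 p r (n + 1) =
        (2 * Polynomial.X - 1) *
          ∑ i ∈ Finset.Icc 1 n,
            Polynomial.C (s i) * (Polynomial.X * (Polynomial.X - 1)) ^ i) ∧
    (∀ s : ℕ → ℚ, DeltaN0 p r (n + 1) =
        (2 * Polynomial.X - 1) *
          ∑ i ∈ Finset.Icc 1 n,
            Polynomial.C (s i) * (Polynomial.X * (Polynomial.X - 1)) ^ i →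
      s n = (-1) ^ (n + 1) / (3 * 2 ^ n * ((n - 1).factorial : ℚ))) ∧
    (DeltaN0 p r (n + 1)).natDegree = 2 * n + 1 ∧
    (DeltaN0 p r (n + 1)).leadingCoeff =
      (-1) ^ (n + 1) / (3 * 2 ^ (n - 1) * ((n - 1).factorial : ℚ)) := by
  obtain ⟨m, rfl⟩ := Nat.exists_eq_add_of_le' hn
  have htop := DeltaN0_coeff_two_mul_add_three hpval hrval hpdeg m
  have hdeg : (DeltaN0 p r (m + 2)).natDegree = 2 * m + 3 :=
    (DeltaN0_natDegree_le hpval hrval hpdeg m).antisymm <| le_natDegree_of_ne_zero <| by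
      rw [htop]
      exact div_ne_zero (pow_ne_zero _ (by norm_num)) (by positivity)
  rw [show m + 1 + 1 = m + 2 from rfl, Nat.add_sub_cancel]
  refine ⟨?_, fun s hs => ?_, by rw [hdeg]; ring, ?_⟩
  · exact exists_eq_two_mul_X_sub_one_mul_sum_of_comp_one_sub_X_eq_neg (m + 1)
      (DeltaN0_comp_one_sub_X hpval hrval _) (DeltaN0_succ_coeff_zero hpval hrval _)
      (by omega)
  · have h := coeff_two_mul_X_sub_one_mul_sum s hn
    rw [← hs, show 2 * (m + 1) + 1 = 2 * m + 3 by ring, htop] at h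
    rw [eq_div_of_mul_eq two_ne_zero ((mul_comm _ _).trans h.symm), pow_succ]
    field_simp
    ring
  · rw [leadingCoeff, hdeg, htop]
    ring

theorem stmt13 (p r : ℕ → Polynomial ℚ)
    (hpdeg : ∀ n : ℕ, (p n).natDegree ≤ 2 * n)
    (hpval : ∀ n : ℕ, ∀ j : ℕ, 1 ≤ j → (p n).eval (j : ℚ) = sigmaP n j)
    (hrdeg : ∀ n : ℕ, (r n).natDegree ≤ 2 * n)
    (hrval : ∀ n : ℕ, ∀ j : ℕ, 1 ≤ j → (r n).eval (j : ℚ) = QP j n)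
    (n : ℕ) (hn : 1 ≤ n) :
    (∃ s : ℕ → ℚ, DeltaN0 p r (n + 1) =
        (2 * Polynomial.X - 1) *
          ∑ i ∈ Finset.Icc 1 n,
            Polynomial.C (s i) * (Polynomial.X * (Polynomial.X - 1)) ^ i) ∧
    (∀ s : ℕ → ℚ, DeltaN0 p r (n + 1) =
        (2 * Polynomial.X - 1) *
          ∑ i ∈ Finset.Icc 1 n,
            Polynomial.C (s i) * (Polynomial.X * (Polynomial.X - 1)) ^ i →
      s n = (-1) ^ (n + 1) / (3 * 2 ^ n * ((n - 1).factorial : ℚ))) ∧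
    (DeltaN0 p r (n + 1)).natDegree = 2 * n + 1 ∧
    (DeltaN0 p r (n + 1)).leadingCoeff =
      (-1) ^ (n + 1) / (3 * 2 ^ (n - 1) * ((n - 1).factorial : ℚ)) :=
  stmt13_general p r hpdeg hpval hrval n hn
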